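/- arXiv:0803.0032 — 2 statements merged into one kernel-verified Lean document; each statement's English description precedes it below -/
import Mathlib

section
/- Dwork–McSherry: ε-differential privacy implies ε̂-semantic privacy with ε̂ = e^ε − 1. That is, if A is ε-differentially private, then for every prior distribution b on D^n, every transcript t with positive probability, and every index i, the statistical difference between the posterior b̂_0[·|t] (computed from A(D)) and the posterior b̂_i[·|t] (computed from A(D_{−i})) is at most e^ε − 1. -/
def Neighbor {D : Type*} {n : ℕ} (D1 D2 : Fin n → D) : Prop :=
  ∃ i : Fin n, ∀ j : Fin n, j ≠ i → D1 j = D2 j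

private lemma aux_frac (k a b c d : ℝ) (hk : 1 ≤ k) (ha : 0 ≤ a) (hb : 0 ≤ b)
    (hc : 0 ≤ c) (hd : 0 ≤ d) (h1 : a ≤ k * c) (h4 : d ≤ k * b)
    (hP : 0 < a + b) (hQ : 0 < c + d) :
    a / (a + b) - c / (c + d) ≤ k - 1 := by
  rw [div_sub_div _ _ (ne_of_gt hP) (ne_of_gt hQ), div_le_iff₀ (by positivity)]
  have had : a * d ≤ k ^ 2 * (b * c) := by nlinarith
  -- suffices: a*d - b*c ≤ (k-1)*(a*c + a*d + b*c + b*d)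
  have key : (2 - k) * (a * d) ≤ k * (b * c) := by
    rcases le_total k 2 with h | h
    · nlinarith [mul_nonneg ha hd, mul_nonneg hb hc,
        mul_nonneg (mul_nonneg (le_trans zero_le_one hk) (sq_nonneg (k - 1))) (mul_nonneg hb hc)]
    · nlinarith [mul_nonneg ha hd, mul_nonneg hb hc]
  nlinarith [mul_nonneg ha hc, mul_nonneg hb hd, sq_nonneg (k - 1)]

theorem dwork_mcsherry_semantic {D T : Type*} [Fintype D] [DecidableEq D] {n : ℕ}
    (A : (Fin n → D) → T → ℝ) (ε : ℝ)
    (hpos : ∀ d t, 0 ≤ A d t)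
    (hDP : ∀ D1 D2 : Fin n → D, Neighbor D1 D2 → ∀ t : T, A D1 t ≤ Real.exp ε * A D2 t)
    (b : (Fin n → D) → ℝ) (hb : ∀ d, 0 ≤ b d) (hb1 : ∑ d : Fin n → D, b d = 1)
    (d0 : D) (t : T) (i : Fin n)
    (hZ0 : 0 < ∑ d : Fin n → D, A d t * b d)
    (hZi : 0 < ∑ d : Fin n → D, A (Function.update d i d0) t * b d) :
    ∀ S : Finset (Fin n → D),
      |(∑ d ∈ S, A d t * b d) / (∑ d' : Fin n → D, A d' t * b d') -
        (∑ d ∈ S, A (Function.update d i d0) t * b d) /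
          (∑ d' : Fin n → D, A (Function.update d' i d0) t * b d')| ≤ Real.exp ε - 1 := by
  intro S
  set k := Real.exp ε with hkdef
  -- k ≥ 1 : from DP applied to a database with positive probability
  have hk : 1 ≤ k := by
    obtain ⟨d, hd⟩ : ∃ d : Fin n → D, 0 < A d t * b d := by
      by_contra h
      push_neg at h
      have : ∑ d : Fin n → D, A d t * b d ≤ 0 := Finset.sum_nonpos (fun d _ => h d)
      linarith
    have hAd : 0 < A d t := by
      rcases lt_or_eq_of_le (hpos d t) with h | h
      · exact h
      · exfalso; rw [← h] at hd; simp at hd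
    have hnb : Neighbor d d := ⟨i, fun j _ => rfl⟩
    have := hDP d d hnb t
    nlinarith
  -- pointwise DP inequalities in both directions
  have hnb1 : ∀ d : Fin n → D, Neighbor d (Function.update d i d0) :=
    fun d => ⟨i, fun j hj => (Function.update_of_ne hj d0 d).symm⟩
  have hnb2 : ∀ d : Fin n → D, Neighbor (Function.update d i d0) d :=
    fun d => ⟨i, fun j hj => Function.update_of_ne hj d0 d⟩
  have h1 : ∀ d : Fin n → D, A d t * b d ≤ k * (A (Function.update d i d0) t * b d) := by
    intro d
    have := hDP d (Function.update d i d0) (hnb1 d) t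
    nlinarith [hb d, hpos d t]
  have h2 : ∀ d : Fin n → D, A (Function.update d i d0) t * b d ≤ k * (A d t * b d) := by
    intro d
    have := hDP (Function.update d i d0) d (hnb2 d) t
    nlinarith [hb d, hpos (Function.update d i d0) t]
  set a := ∑ d ∈ S, A d t * b d with hadef
  set b' := ∑ d ∈ Sᶜ, A d t * b d with hbdef
  set c := ∑ d ∈ S, A (Function.update d i d0) t * b d with hcdef
  set d' := ∑ d ∈ Sᶜ, A (Function.update d i d0) t * b d with hddef
  have hPsplit : a + b' = ∑ d : Fin n → D, A d t * b d := Finset.sum_add_sum_compl S _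
  have hQsplit : c + d' = ∑ d : Fin n → D, A (Function.update d i d0) t * b d :=
    Finset.sum_add_sum_compl S _
  have ha : 0 ≤ a := Finset.sum_nonneg fun d _ => mul_nonneg (hpos d t) (hb d)
  have hb' : 0 ≤ b' := Finset.sum_nonneg fun d _ => mul_nonneg (hpos d t) (hb d)
  have hc : 0 ≤ c := Finset.sum_nonneg fun d _ => mul_nonneg (hpos _ t) (hb d)
  have hd' : 0 ≤ d' := Finset.sum_nonneg fun d _ => mul_nonneg (hpos _ t) (hb d)
  have hac : a ≤ k * c := by
    rw [hadef, hcdef, Finset.mul_sum]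
    exact Finset.sum_le_sum fun d _ => h1 d
  have hca : c ≤ k * a := by
    rw [hadef, hcdef, Finset.mul_sum]
    exact Finset.sum_le_sum fun d _ => h2 d
  have hbd : b' ≤ k * d' := by
    rw [hbdef, hddef, Finset.mul_sum]
    exact Finset.sum_le_sum fun d _ => h1 d
  have hdb : d' ≤ k * b' := by
    rw [hbdef, hddef, Finset.mul_sum]
    exact Finset.sum_le_sum fun d _ => h2 d
  rw [← hPsplit, ← hQsplit]
  have hP : 0 < a + b' := hPsplit ▸ hZ0
  have hQ : 0 < c + d' := hQsplit ▸ hZi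
  rw [abs_sub_le_iff]
  constructor
  · exact aux_frac k a b' c d' hk ha hb' hc hd' hac hdb hP hQ
  · exact aux_frac k c d' a b' hk hc hd' ha hb' hca hbd hQ hP
end

section
/- (ε, δ)-differential privacy implies (ε', δ')-semantic privacy, where ε' = e^{3ε} − 1 + 2√δ and δ' = O(n√δ): for every prior b on D^n, with probability at least 1 − δ' over D ← b and t ← A(D), for every i ∈ {1,…,n} the statistical difference between the posteriors b̂_0[·|t] and b̂_i[·|t] is at most ε'. -/
private lemma poly_key {t : ℝ} (ht : 1 ≤ t) :
    2*t^2 + (t-1)*t/2 ≤ 1 + t^5 := by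
  nlinarith [mul_nonneg (sub_nonneg.mpr ht) (sub_nonneg.mpr ht), sq_nonneg t,
    mul_nonneg (sub_nonneg.mpr ht) (show (0:ℝ) ≤ 2*t^4+2*t^3+2*t^2-3*t-2 by nlinarith [pow_le_pow_left₀ (by linarith : (0:ℝ) ≤ 1) ht 2, pow_le_pow_left₀ (by linarith : (0:ℝ) ≤ 1) ht 3, pow_le_pow_left₀ (by linarith : (0:ℝ) ≤ 1) ht 4, sq_nonneg (t-1)])]

private lemma key_scalar {ε sδ : ℝ} (hε : 0 < ε) (hsδ : 0 ≤ sδ) :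
    (1 - (Real.exp (3*ε) - 1 + 2*sδ)) * (Real.exp ε)^2 + sδ * Real.exp ε ≤ 1 - ε * Real.exp ε / 2 := by
  set t := Real.exp ε with ht_def
  have ht : 1 ≤ t := Real.one_le_exp hε.le
  have hεt : ε + 1 ≤ t := Real.add_one_le_exp ε
  have h3 : Real.exp (3*ε) = t^3 := by
    rw [show (3:ℝ)*ε = ε+ε+ε by ring, Real.exp_add, Real.exp_add]; ring
  rw [h3]
  have hp := poly_key ht
  have htt : t ≤ t^2 := by nlinarith
  have h1 : sδ * t ≤ sδ * t^2 := mul_le_mul_of_nonneg_left htt hsδ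
  have h2 : ε * t ≤ (t-1) * t := by nlinarith
  nlinarith [mul_nonneg hsδ (show (0:ℝ) ≤ t^2 by positivity)]

private lemma core_bound {s s' F G X sδ e a K : ℝ} (hF : 0 < F) (hG : 0 < G)
    (hs0 : 0 ≤ s) (hsF : s ≤ F) (hs'G : s' ≤ G) (hlin : s' ≤ e * s + X)
    (hX : X ≤ sδ * F) (hGl : (1 - a) * F ≤ e * G) (he : 1 ≤ e) (hsδ : 0 ≤ sδ)
    (hK2 : 2 * sδ ≤ K) (hkey : (1 - K) * e^2 + sδ * e ≤ 1 - a) :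
    s' / G - s / F ≤ K := by
  have he0 : 0 < e := lt_of_lt_of_le one_pos he
  have hK0 : 0 ≤ K := le_trans (by linarith) hK2
  rw [div_sub_div _ _ hG.ne' hF.ne', div_le_iff₀ (mul_pos hG hF)]
  by_cases h1 : (1 - K) * F ≤ s
  · nlinarith [mul_le_mul_of_nonneg_right hs'G hF.le, mul_le_mul_of_nonneg_left h1 hG.le]
  · push_neg at h1
    have hK1 : 0 < 1 - K := by nlinarith
    by_cases h2 : e * F ≤ G
    · have hFG : F ≤ G := le_trans (le_mul_of_one_le_left hF.le he) h2
      have hKG : sδ * F ≤ K * G := mul_le_mul (by linarith) hFG hF.le hK0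
      nlinarith [mul_le_mul_of_nonneg_right hlin hF.le,
        mul_nonneg hs0 (sub_nonneg.mpr h2),
        mul_le_mul_of_nonneg_right hKG hF.le,
        mul_le_mul_of_nonneg_right hX hF.le]
    · push_neg at h2
      have hC : ((1 - K) * e + sδ) * F ≤ G := by
        have hA : (((1 - K) * e + sδ) * F) * e ≤ G * e := by
          nlinarith [mul_le_mul_of_nonneg_right hkey hF.le]
        exact le_of_mul_le_mul_right hA he0
      have hs1 : s * (e * F - G) ≤ ((1 - K) * F) * (e * F - G) :=
        mul_le_mul_of_nonneg_right h1.le (by linarith)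
      nlinarith [mul_le_mul_of_nonneg_right hlin hF.le,
        mul_le_mul_of_nonneg_right hC hF.le]

set_option maxHeartbeats 3200000 in
theorem approx_dp_implies_semantic {D T : Type*} [Fintype D] [DecidableEq D] {n : ℕ}
    (A : (Fin n → D) → T → ℝ) (ε δ : ℝ) (hε : 0 < ε) (hδ0 : 0 < δ) (hδ1 : δ < 1)
    (hpos : ∀ d t, 0 ≤ A d t) (hsum : ∀ d, HasSum (A d) 1)
    (hDP : ∀ D1 D2 : Fin n → D, Neighbor D1 D2 →
        ∀ S : Set T, ∑' t : S, A D1 t.1 ≤ Real.exp ε * ∑' t : S, A D2 t.1 + δ)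
    (b : (Fin n → D) → ℝ) (hb : ∀ d, 0 ≤ b d) (hb1 : ∑ d : Fin n → D, b d = 1)
    (d0 : D) :
    ∃ G : Set ((Fin n → D) × T),
      1 - n * (Real.sqrt δ + 2 * δ / (ε * Real.exp ε)) ≤ ∑' z : G, b z.1.1 * A z.1.1 z.1.2 ∧
      ∀ d : Fin n → D, ∀ t : T, (d, t) ∈ G → ∀ i : Fin n,
        0 < (∑ d' : Fin n → D, A d' t * b d') ∧
        0 < (∑ d' : Fin n → D, A (Function.update d' i d0) t * b d') ∧
        ∀ S : Finset (Fin n → D),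
          |(∑ x ∈ S, A x t * b x) / (∑ d' : Fin n → D, A d' t * b d') -
            (∑ x ∈ S, A (Function.update x i d0) t * b x) /
              (∑ d' : Fin n → D, A (Function.update d' i d0) t * b d')| ≤
          Real.exp (3 * ε) - 1 + 2 * Real.sqrt δ := by
  classical
  set e := Real.exp ε with he_def
  have he0 : 0 < e := Real.exp_pos ε
  have he1 : 1 ≤ e := Real.one_le_exp hε.le
  set sδ := Real.sqrt δ with hsδ_def
  have hsδ0 : 0 < sδ := Real.sqrt_pos.mpr hδ0
  have hsδδ : sδ * sδ = δ := Real.mul_self_sqrt hδ0.le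
  have hsδ1 : sδ ≤ 1 := by nlinarith
  have hδsδ : δ ≤ sδ := by nlinarith
  set K := Real.exp (3 * ε) - 1 + 2 * sδ with hK_def
  have hexp31 : 1 ≤ Real.exp (3 * ε) := Real.one_le_exp (by linarith)
  have hK2 : 2 * sδ ≤ K := by rw [hK_def]; linarith
  have hK0 : 0 ≤ K := by linarith
  set a := ε * e / 2 with ha_def
  have ha0 : 0 < a := by rw [ha_def]; positivity
  have hδa : δ / a = 2 * δ / (ε * e) := by
    rw [ha_def]; field_simp
  have hδsδ' : δ / sδ = sδ := by
    rw [div_eq_iff hsδ0.ne']; linarith [hsδδ]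
  -- basic functions
  set F : T → ℝ := fun t => ∑ d' : Fin n → D, A d' t * b d' with hF_def
  set Gm : Fin n → T → ℝ :=
    fun i t => ∑ d' : Fin n → D, A (Function.update d' i d0) t * b d' with hGm_def
  have hF0 : ∀ t, 0 ≤ F t := fun t =>
    Finset.sum_nonneg fun x _ => mul_nonneg (hpos x t) (hb x)
  have hGm0 : ∀ i t, 0 ≤ Gm i t := fun i t =>
    Finset.sum_nonneg fun x _ => mul_nonneg (hpos _ t) (hb x)
  have hsumA : ∀ d, Summable (A d) := fun d => (hsum d).summable
  have hFsummable : Summable F :=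
    summable_sum fun x _ => (hsumA x).mul_right (b x)
  -- the indicator error functions
  set E1 : Fin n → (Fin n → D) → Set T :=
    fun i x => {t | e * A x t < A (Function.update x i d0) t} with hE1_def
  set E2 : Fin n → (Fin n → D) → Set T :=
    fun i x => {t | e * A (Function.update x i d0) t < A x t} with hE2_def
  set I1 : Fin n → (Fin n → D) → T → ℝ :=
    fun i x => (E1 i x).indicator (fun u => A (Function.update x i d0) u - e * A x u) with hI1_def
  set I2 : Fin n → (Fin n → D) → T → ℝ :=
    fun i x => (E2 i x).indicator (fun u => A x u - e * A (Function.update x i d0) u) with hI2_def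
  set X : Fin n → T → ℝ := fun i t => ∑ x : Fin n → D, I1 i x t * b x with hX_def
  set Y : Fin n → T → ℝ := fun i t => ∑ x : Fin n → D, I2 i x t * b x with hY_def
  have hI1nn : ∀ i x t, 0 ≤ I1 i x t := by
    intro i x t
    rw [hI1_def]
    refine Set.indicator_nonneg (fun u hu => ?_) t
    have hu' : e * A x u < A (Function.update x i d0) u := hu
    linarith
  have hI2nn : ∀ i x t, 0 ≤ I2 i x t := by
    intro i x t
    rw [hI2_def]
    refine Set.indicator_nonneg (fun u hu => ?_) t
    have hu' : e * A (Function.update x i d0) u < A x u := hu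
    linarith
  have hI1pt : ∀ i x t, A (Function.update x i d0) t ≤ e * A x t + I1 i x t := by
    intro i x t
    by_cases h : t ∈ E1 i x
    · have : I1 i x t = A (Function.update x i d0) t - e * A x t := by
        rw [hI1_def]; exact Set.indicator_of_mem h _
      linarith
    · have h0 : I1 i x t = 0 := by rw [hI1_def]; exact Set.indicator_of_notMem h _
      have h1 : ¬ (e * A x t < A (Function.update x i d0) t) := h
      push_neg at h1
      linarith
  have hI2pt : ∀ i x t, A x t ≤ e * A (Function.update x i d0) t + I2 i x t := by
    intro i x t
    by_cases h : t ∈ E2 i x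
    · have : I2 i x t = A x t - e * A (Function.update x i d0) t := by
        rw [hI2_def]; exact Set.indicator_of_mem h _
      linarith
    · have h0 : I2 i x t = 0 := by rw [hI2_def]; exact Set.indicator_of_notMem h _
      have h1 : ¬ (e * A (Function.update x i d0) t < A x t) := h
      push_neg at h1
      linarith
  have hXnn : ∀ i t, 0 ≤ X i t := fun i t =>
    Finset.sum_nonneg fun x _ => mul_nonneg (hI1nn i x t) (hb x)
  have hYnn : ∀ i t, 0 ≤ Y i t := fun i t =>
    Finset.sum_nonneg fun x _ => mul_nonneg (hI2nn i x t) (hb x)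
  have hI1sum : ∀ i x, Summable (I1 i x) := by
    intro i x
    rw [hI1_def]
    exact ((hsumA (Function.update x i d0)).sub ((hsumA x).mul_left e)).indicator _
  have hI2sum : ∀ i x, Summable (I2 i x) := by
    intro i x
    rw [hI2_def]
    exact ((hsumA x).sub ((hsumA (Function.update x i d0)).mul_left e)).indicator _
  have hXsum : ∀ i, Summable (X i) := fun i =>
    summable_sum fun x _ => (hI1sum i x).mul_right (b x)
  have hYsum : ∀ i, Summable (Y i) := fun i =>
    summable_sum fun x _ => (hI2sum i x).mul_right (b x)
  -- pointwise comparisons of F and Gm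
  have hGF : ∀ i t, Gm i t ≤ e * F t + X i t := by
    intro i t
    have hle : Gm i t ≤ ∑ x : Fin n → D, (e * A x t + I1 i x t) * b x :=
      Finset.sum_le_sum fun x _ => mul_le_mul_of_nonneg_right (hI1pt i x t) (hb x)
    refine hle.trans (le_of_eq ?_)
    rw [hF_def, hX_def]
    rw [Finset.mul_sum, ← Finset.sum_add_distrib]
    exact Finset.sum_congr rfl fun x _ => by ring
  have hFG : ∀ i t, F t ≤ e * Gm i t + Y i t := by
    intro i t
    have hle : F t ≤ ∑ x : Fin n → D, (e * A (Function.update x i d0) t + I2 i x t) * b x :=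
      Finset.sum_le_sum fun x _ => mul_le_mul_of_nonneg_right (hI2pt i x t) (hb x)
    refine hle.trans (le_of_eq ?_)
    rw [hGm_def, hY_def]
    rw [Finset.mul_sum, ← Finset.sum_add_distrib]
    exact Finset.sum_congr rfl fun x _ => by ring
  -- tsum bounds from DP
  have hI1tsum : ∀ i x, ∑' t, I1 i x t ≤ δ := by
    intro i x
    have hnb : Neighbor (Function.update x i d0) x :=
      ⟨i, fun j hj => Function.update_of_ne hj _ _⟩
    have hdp := hDP _ _ hnb (E1 i x)
    have h1 : ∑' t, I1 i x t
        = (∑' u : E1 i x, A (Function.update x i d0) u.1)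
          - e * ∑' u : E1 i x, A x u.1 := by
      have hs1 : Summable (fun u : (E1 i x : Set T) => A (Function.update x i d0) u.1) :=
        (hsumA _).subtype _
      have hs2 : Summable (fun u : (E1 i x : Set T) => e * A x u.1) :=
        ((hsumA x).subtype _).mul_left e
      rw [hI1_def, ← tsum_subtype]
      rw [Summable.tsum_sub hs1 hs2, tsum_mul_left]
    rw [h1]
    linarith
  have hI2tsum : ∀ i x, ∑' t, I2 i x t ≤ δ := by
    intro i x
    have hnb : Neighbor x (Function.update x i d0) :=
      ⟨i, fun j hj => (Function.update_of_ne hj _ _).symm⟩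
    have hdp := hDP _ _ hnb (E2 i x)
    have h1 : ∑' t, I2 i x t
        = (∑' u : E2 i x, A x u.1)
          - e * ∑' u : E2 i x, A (Function.update x i d0) u.1 := by
      have hs1 : Summable (fun u : (E2 i x : Set T) => A x u.1) :=
        (hsumA _).subtype _
      have hs2 : Summable (fun u : (E2 i x : Set T) => e * A (Function.update x i d0) u.1) :=
        ((hsumA (Function.update x i d0)).subtype _).mul_left e
      rw [hI2_def, ← tsum_subtype]
      rw [Summable.tsum_sub hs1 hs2, tsum_mul_left]
    rw [h1]
    linarith
  have hXtsum : ∀ i, ∑' t, X i t ≤ δ := by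
    intro i
    rw [hX_def]
    rw [Summable.tsum_finsetSum fun x _ => (hI1sum i x).mul_right (b x)]
    calc ∑ x : Fin n → D, ∑' t, I1 i x t * b x
        = ∑ x : Fin n → D, (∑' t, I1 i x t) * b x :=
          Finset.sum_congr rfl fun x _ => tsum_mul_right
      _ ≤ ∑ x : Fin n → D, δ * b x :=
          Finset.sum_le_sum fun x _ => mul_le_mul_of_nonneg_right (hI1tsum i x) (hb x)
      _ = δ := by rw [← Finset.mul_sum, hb1, mul_one]
  have hYtsum : ∀ i, ∑' t, Y i t ≤ δ := by
    intro i
    rw [hY_def]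
    rw [Summable.tsum_finsetSum fun x _ => (hI2sum i x).mul_right (b x)]
    calc ∑ x : Fin n → D, ∑' t, I2 i x t * b x
        = ∑ x : Fin n → D, (∑' t, I2 i x t) * b x :=
          Finset.sum_congr rfl fun x _ => tsum_mul_right
      _ ≤ ∑ x : Fin n → D, δ * b x :=
          Finset.sum_le_sum fun x _ => mul_le_mul_of_nonneg_right (hI2tsum i x) (hb x)
      _ = δ := by rw [← Finset.mul_sum, hb1, mul_one]
  -- mass identity
  have hmassEq : ∀ Tg : Set T,
      ∑' z : ({z : (Fin n → D) × T | z.2 ∈ Tg} : Set ((Fin n → D) × T)),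
          b z.1.1 * A z.1.1 z.1.2
        = 1 - ∑' t, (Tgᶜ).indicator F t := by
    intro Tg
    have h1 : ∑' z : ({z : (Fin n → D) × T | z.2 ∈ Tg} : Set ((Fin n → D) × T)),
        b z.1.1 * A z.1.1 z.1.2
        = ∑' z : (Fin n → D) × T,
            ({z : (Fin n → D) × T | z.2 ∈ Tg}).indicator (fun z => b z.1 * A z.1 z.2) z :=
      tsum_subtype {z : (Fin n → D) × T | z.2 ∈ Tg} (fun z => b z.1 * A z.1 z.2)
    have h2 : ∀ z : (Fin n → D) × T,
        ({z : (Fin n → D) × T | z.2 ∈ Tg}).indicator (fun z => b z.1 * A z.1 z.2) z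
          = b z.1 * Tg.indicator (A z.1) z.2 := by
      intro z
      by_cases hz : z.2 ∈ Tg
      · rw [Set.indicator_of_mem hz, Set.indicator_of_mem (show z ∈ _ from hz)]
      · rw [Set.indicator_of_notMem hz, Set.indicator_of_notMem (show z ∉ _ from hz), mul_zero]
    have hsummable : Summable (fun z : (Fin n → D) × T => b z.1 * Tg.indicator (A z.1) z.2) := by
      refine (summable_prod_of_nonneg ?_).mpr ⟨?_, ?_⟩
      · intro z
        exact mul_nonneg (hb _) (Set.indicator_nonneg (fun u _ => hpos _ _) _)
      · intro d
        exact ((hsumA d).indicator Tg).mul_left (b d)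
      · exact Summable.of_finite
    have h3 : ∑' z : (Fin n → D) × T, b z.1 * Tg.indicator (A z.1) z.2
        = ∑ d : Fin n → D, b d * ∑' t, Tg.indicator (A d) t := by
      rw [Summable.tsum_prod' hsummable (fun d => ((hsumA d).indicator Tg).mul_left (b d)),
        tsum_fintype]
      refine Finset.sum_congr rfl fun d _ => ?_
      have hml : (∑' c : T, b d * Tg.indicator (A d) c) = b d * ∑' t, Tg.indicator (A d) t :=
        tsum_mul_left
      simpa using hml
    have h4 : ∀ d, ∑' t, Tg.indicator (A d) t = 1 - ∑' t, (Tgᶜ).indicator (A d) t := by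
      intro d
      have hc : ∀ t, Tg.indicator (A d) t = A d t - (Tgᶜ).indicator (A d) t := by
        intro t
        by_cases ht : t ∈ Tg
        · rw [Set.indicator_of_mem ht, Set.indicator_of_notMem (by simpa using ht)]
          ring
        · rw [Set.indicator_of_notMem ht, Set.indicator_of_mem (by simpa using ht)]
          ring
      calc ∑' t, Tg.indicator (A d) t
          = ∑' t, (A d t - (Tgᶜ).indicator (A d) t) := tsum_congr hc
        _ = (∑' t, A d t) - ∑' t, (Tgᶜ).indicator (A d) t :=
            Summable.tsum_sub (hsumA d) ((hsumA d).indicator _)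
        _ = 1 - ∑' t, (Tgᶜ).indicator (A d) t := by rw [(hsum d).tsum_eq]
    have h5 : ∑ d : Fin n → D, b d * ∑' t, (Tgᶜ).indicator (A d) t
        = ∑' t, (Tgᶜ).indicator F t := by
      have hpt : ∀ t, (Tgᶜ).indicator F t = ∑ d : Fin n → D, b d * (Tgᶜ).indicator (A d) t := by
        intro t
        by_cases ht : t ∈ Tgᶜ
        · rw [Set.indicator_of_mem ht]
          rw [hF_def]
          refine Finset.sum_congr rfl fun d _ => ?_
          rw [Set.indicator_of_mem ht, mul_comm]
        · rw [Set.indicator_of_notMem ht]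
          symm
          refine Finset.sum_eq_zero fun d _ => ?_
          rw [Set.indicator_of_notMem ht, mul_zero]
      calc ∑ d : Fin n → D, b d * ∑' t, (Tgᶜ).indicator (A d) t
          = ∑ d : Fin n → D, ∑' t, b d * (Tgᶜ).indicator (A d) t :=
            Finset.sum_congr rfl fun d _ => tsum_mul_left.symm
        _ = ∑' t, ∑ d : Fin n → D, b d * (Tgᶜ).indicator (A d) t :=
            (Summable.tsum_finsetSum fun d _ => ((hsumA d).indicator _).mul_left (b d)).symm
        _ = ∑' t, (Tgᶜ).indicator F t := tsum_congr fun t => (hpt t).symm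
    rw [h1, tsum_congr h2, h3]
    rw [Finset.sum_congr rfl fun d _ => by rw [h4 d]]
    rw [← h5]
    have : ∑ d : Fin n → D, b d * (1 - ∑' t, (Tgᶜ).indicator (A d) t)
        = (∑ d : Fin n → D, b d) - ∑ d : Fin n → D, b d * ∑' t, (Tgᶜ).indicator (A d) t := by
      rw [← Finset.sum_sub_distrib]
      exact Finset.sum_congr rfl fun d _ => by ring
    rw [this, hb1]
  -- Markov
  have hMarkov : ∀ (Z : T → ℝ) (θ : ℝ), 0 < θ → Summable Z → (∀ t, 0 ≤ Z t) →
      ∑' t, ({t | θ * F t < Z t}).indicator F t ≤ (∑' t, Z t) / θ := by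
    intro Z θ hθ hZs hZ0
    have hpt : ∀ t, ({t | θ * F t < Z t}).indicator F t ≤ Z t / θ := by
      intro t
      by_cases ht : t ∈ {t | θ * F t < Z t}
      · rw [Set.indicator_of_mem ht]
        have ht' : θ * F t < Z t := ht
        rw [le_div_iff₀ hθ]
        nlinarith
      · rw [Set.indicator_of_notMem ht]
        exact div_nonneg (hZ0 t) hθ.le
    calc ∑' t, ({t | θ * F t < Z t}).indicator F t
        ≤ ∑' t, Z t / θ := Summable.tsum_le_tsum hpt (hFsummable.indicator _) (hZs.div_const θ)
      _ = (∑' t, Z t) / θ := tsum_div_const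
  -- subadditivity over the bad sets
  have hsub : ∀ (W1 W2 : Fin n → Set T) (Tg : Set T),
      (∀ t, t ∉ Tg → F t ≠ 0 → ∃ i, t ∈ W1 i ∨ t ∈ W2 i) →
      ∑' t, (Tgᶜ).indicator F t
        ≤ ∑ i : Fin n, ((∑' t, (W1 i).indicator F t) + ∑' t, (W2 i).indicator F t) := by
    intro W1 W2 Tg hcov
    have hnn : ∀ (W : Set T) t, 0 ≤ W.indicator F t :=
      fun W t => Set.indicator_nonneg (fun u _ => hF0 u) t
    have hpt : ∀ t, (Tgᶜ).indicator F t
        ≤ ∑ i : Fin n, ((W1 i).indicator F t + (W2 i).indicator F t) := by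
      intro t
      have hR0 : 0 ≤ ∑ i : Fin n, ((W1 i).indicator F t + (W2 i).indicator F t) :=
        Finset.sum_nonneg fun i _ => add_nonneg (hnn _ t) (hnn _ t)
      by_cases ht : t ∈ Tg
      · rw [Set.indicator_of_notMem (by simpa using ht)]
        exact hR0
      · rw [Set.indicator_of_mem (by simpa using ht)]
        by_cases hFt : F t = 0
        · rw [hFt]; exact hR0
        · obtain ⟨i, hi⟩ := hcov t ht hFt
          have hterm : F t ≤ (W1 i).indicator F t + (W2 i).indicator F t := by
            rcases hi with hi | hi
            · rw [Set.indicator_of_mem hi]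
              linarith [hnn (W2 i) t]
            · rw [Set.indicator_of_mem hi]
              linarith [hnn (W1 i) t]
          refine hterm.trans ?_
          exact Finset.single_le_sum
            (fun j _ => add_nonneg (hnn _ t) (hnn _ t)) (Finset.mem_univ i)
    calc ∑' t, (Tgᶜ).indicator F t
        ≤ ∑' t, ∑ i : Fin n, ((W1 i).indicator F t + (W2 i).indicator F t) :=
          Summable.tsum_le_tsum hpt (hFsummable.indicator _)
            (summable_sum fun i _ => (hFsummable.indicator _).add (hFsummable.indicator _))
      _ = ∑ i : Fin n, ((∑' t, (W1 i).indicator F t) + ∑' t, (W2 i).indicator F t) := by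
          rw [Summable.tsum_finsetSum fun i _ => (hFsummable.indicator _).add (hFsummable.indicator _)]
          exact Finset.sum_congr rfl fun i _ =>
            Summable.tsum_add (hFsummable.indicator _) (hFsummable.indicator _)
  -- case split on K
  rcases le_or_gt 1 K with hKcase | hKcase
  · -- trivial case : K ≥ 1
    refine ⟨{z : (Fin n → D) × T | z.2 ∈ {t | 0 < F t ∧ ∀ i, 0 < Gm i t}}, ?_, ?_⟩
    · rw [hmassEq]
      have hbound : ∑' t, ({t | 0 < F t ∧ ∀ i, 0 < Gm i t}ᶜ).indicator F t
          ≤ n * (sδ + 2 * δ / (ε * e)) := by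
        have hcov : ∀ t, t ∉ {t | 0 < F t ∧ ∀ i, 0 < Gm i t} → F t ≠ 0 →
            ∃ i, t ∈ {t | Gm i t ≤ 0} ∨ t ∈ (∅ : Set T) := by
          intro t ht hFt
          simp only [Set.mem_setOf_eq, not_and, not_forall, not_lt] at ht
          have hFpos : 0 < F t := lt_of_le_of_ne (hF0 t) (Ne.symm hFt)
          obtain ⟨i, hi⟩ := ht hFpos
          exact ⟨i, Or.inl hi⟩
        have h := hsub (fun i => {t | Gm i t ≤ 0}) (fun _ => ∅) _ hcov
        have hper : ∀ i : Fin n,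
            (∑' t, ({t | Gm i t ≤ 0}).indicator F t) + ∑' t, (∅ : Set T).indicator F t
              ≤ sδ + 2 * δ / (ε * e) := by
          intro i
          have h1 : ∑' t, ({t | Gm i t ≤ 0}).indicator F t ≤ ∑' t, Y i t := by
            refine Summable.tsum_le_tsum ?_ (hFsummable.indicator _) (hYsum i)
            intro t
            by_cases ht : t ∈ {t | Gm i t ≤ 0}
            · rw [Set.indicator_of_mem ht]
              have ht' : Gm i t ≤ 0 := ht
              have := hFG i t
              nlinarith
            · rw [Set.indicator_of_notMem ht]
              exact hYnn i t
          have h2 : ∑' t, (∅ : Set T).indicator F t = 0 := by simp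
          have h3 : (0:ℝ) ≤ 2 * δ / (ε * e) := by positivity
          have := hYtsum i
          rw [h2]
          linarith
        calc ∑' t, ({t | 0 < F t ∧ ∀ i, 0 < Gm i t}ᶜ).indicator F t
            ≤ ∑ i : Fin n, ((∑' t, ({t | Gm i t ≤ 0}).indicator F t)
                + ∑' t, (∅ : Set T).indicator F t) := h
          _ ≤ ∑ i : Fin n, (sδ + 2 * δ / (ε * e)) := Finset.sum_le_sum fun i _ => hper i
          _ = n * (sδ + 2 * δ / (ε * e)) := by
              rw [Finset.sum_const, Finset.card_univ, Fintype.card_fin, nsmul_eq_mul]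
      linarith
    · intro d t hdt i
      have hdt' : 0 < F t ∧ ∀ i, 0 < Gm i t := hdt
      obtain ⟨hFt, hGt⟩ := hdt'
      refine ⟨hFt, hGt i, fun S => ?_⟩
      have hs1nn : 0 ≤ ∑ x ∈ S, A x t * b x :=
        Finset.sum_nonneg fun x _ => mul_nonneg (hpos x t) (hb x)
      have hs2nn : 0 ≤ ∑ x ∈ S, A (Function.update x i d0) t * b x :=
        Finset.sum_nonneg fun x _ => mul_nonneg (hpos _ t) (hb x)
      have hs1le : ∑ x ∈ S, A x t * b x ≤ F t :=
        Finset.sum_le_sum_of_subset_of_nonneg (Finset.subset_univ S)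
          (fun x _ _ => mul_nonneg (hpos x t) (hb x))
      have hs2le : ∑ x ∈ S, A (Function.update x i d0) t * b x ≤ Gm i t :=
        Finset.sum_le_sum_of_subset_of_nonneg (Finset.subset_univ S)
          (fun x _ _ => mul_nonneg (hpos _ t) (hb x))
      have hp1 : (∑ x ∈ S, A x t * b x) / F t ≤ 1 := div_le_one_of_le₀ hs1le (hF0 t)
      have hp0 : 0 ≤ (∑ x ∈ S, A x t * b x) / F t := div_nonneg hs1nn (hF0 t)
      have hq1 : (∑ x ∈ S, A (Function.update x i d0) t * b x) / Gm i t ≤ 1 :=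
        div_le_one_of_le₀ hs2le (hGm0 i t)
      have hq0 : 0 ≤ (∑ x ∈ S, A (Function.update x i d0) t * b x) / Gm i t :=
        div_nonneg hs2nn (hGm0 i t)
      rw [abs_le]
      constructor <;> [linarith; linarith]
  · -- main case : K < 1
    have hexp3 : Real.exp (3 * ε) < 2 := by
      rw [hK_def] at hKcase
      nlinarith
    have hε3 : 3 * ε < 1 := by nlinarith [Real.add_one_le_exp (3 * ε)]
    have he2 : e < 2 := by
      rw [he_def]
      calc Real.exp ε ≤ Real.exp (3 * ε) := Real.exp_le_exp.mpr (by linarith)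
        _ < 2 := hexp3
    have ha1 : a < 1 := by
      rw [ha_def]
      nlinarith [mul_lt_mul_of_pos_left he2 hε]
    refine ⟨{z : (Fin n → D) × T |
        z.2 ∈ {t | 0 < F t ∧ ∀ i, X i t ≤ sδ * F t ∧ Y i t ≤ a * F t}}, ?_, ?_⟩
    · rw [hmassEq]
      have hbound : ∑' t,
          ({t | 0 < F t ∧ ∀ i, X i t ≤ sδ * F t ∧ Y i t ≤ a * F t}ᶜ).indicator F t
          ≤ n * (sδ + 2 * δ / (ε * e)) := by
        have hcov : ∀ t, t ∉ {t | 0 < F t ∧ ∀ i, X i t ≤ sδ * F t ∧ Y i t ≤ a * F t} →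
            F t ≠ 0 →
            ∃ i, t ∈ {t | sδ * F t < X i t} ∨ t ∈ {t | a * F t < Y i t} := by
          intro t ht hFt
          simp only [Set.mem_setOf_eq, not_and, not_forall, not_lt] at ht
          have hFpos : 0 < F t := lt_of_le_of_ne (hF0 t) (Ne.symm hFt)
          obtain ⟨i, hi⟩ := ht hFpos
          by_cases hx : X i t ≤ sδ * F t
          · exact ⟨i, Or.inr (not_le.mp (hi hx))⟩
          · exact ⟨i, Or.inl (not_le.mp hx)⟩
        have h := hsub (fun i => {t | sδ * F t < X i t}) (fun i => {t | a * F t < Y i t}) _ hcov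
        have hper : ∀ i : Fin n,
            (∑' t, ({t | sδ * F t < X i t}).indicator F t)
              + ∑' t, ({t | a * F t < Y i t}).indicator F t
              ≤ sδ + 2 * δ / (ε * e) := by
          intro i
          have h1 : ∑' t, ({t | sδ * F t < X i t}).indicator F t ≤ sδ := by
            refine le_trans (hMarkov (X i) sδ hsδ0 (hXsum i) (hXnn i)) ?_
            rw [div_le_iff₀ hsδ0, hsδδ]
            exact hXtsum i
          have h2 : ∑' t, ({t | a * F t < Y i t}).indicator F t ≤ 2 * δ / (ε * e) := by
            refine le_trans (hMarkov (Y i) a ha0 (hYsum i) (hYnn i)) ?_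
            rw [← hδa]
            gcongr
            exact hYtsum i
          linarith
        calc ∑' t,
            ({t | 0 < F t ∧ ∀ i, X i t ≤ sδ * F t ∧ Y i t ≤ a * F t}ᶜ).indicator F t
            ≤ ∑ i : Fin n, ((∑' t, ({t | sδ * F t < X i t}).indicator F t)
                + ∑' t, ({t | a * F t < Y i t}).indicator F t) := h
          _ ≤ ∑ i : Fin n, (sδ + 2 * δ / (ε * e)) := Finset.sum_le_sum fun i _ => hper i
          _ = n * (sδ + 2 * δ / (ε * e)) := by
              rw [Finset.sum_const, Finset.card_univ, Fintype.card_fin, nsmul_eq_mul]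
      linarith
    · intro d t hdt i
      have hdt' : 0 < F t ∧ ∀ i, X i t ≤ sδ * F t ∧ Y i t ≤ a * F t := hdt
      obtain ⟨hFt, hcond⟩ := hdt'
      obtain ⟨hXc, hYc⟩ := hcond i
      have hGl : (1 - a) * F t ≤ e * Gm i t := by
        have := hFG i t
        nlinarith
      have hGpos : 0 < Gm i t := by
        have h1 : 0 < (1 - a) * F t := by nlinarith
        have h2 : 0 < e * Gm i t := lt_of_lt_of_le h1 hGl
        by_contra hcon
        push_neg at hcon
        nlinarith [mul_nonneg he0.le (neg_nonneg.mpr hcon)]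
      refine ⟨hFt, hGpos, fun S => ?_⟩
      have hkey : (1 - K) * e ^ 2 + sδ * e ≤ 1 - a := by
        have h := key_scalar (ε := ε) (sδ := sδ) hε hsδ0.le
        rw [hK_def, ha_def, he_def]
        exact h
      have dir : ∀ S' : Finset (Fin n → D),
          (∑ x ∈ S', A (Function.update x i d0) t * b x) / Gm i t
            - (∑ x ∈ S', A x t * b x) / F t ≤ K := by
        intro S'
        have hs0 : 0 ≤ ∑ x ∈ S', A x t * b x :=
          Finset.sum_nonneg fun x _ => mul_nonneg (hpos x t) (hb x)
        have hsF : ∑ x ∈ S', A x t * b x ≤ F t :=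
          Finset.sum_le_sum_of_subset_of_nonneg (Finset.subset_univ _)
            fun x _ _ => mul_nonneg (hpos x t) (hb x)
        have hs'G : ∑ x ∈ S', A (Function.update x i d0) t * b x ≤ Gm i t :=
          Finset.sum_le_sum_of_subset_of_nonneg (Finset.subset_univ _)
            fun x _ _ => mul_nonneg (hpos _ t) (hb x)
        have hlin : ∑ x ∈ S', A (Function.update x i d0) t * b x
            ≤ e * (∑ x ∈ S', A x t * b x) + X i t := by
          have hle : ∑ x ∈ S', A (Function.update x i d0) t * b x
              ≤ ∑ x ∈ S', (e * A x t + I1 i x t) * b x :=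
            Finset.sum_le_sum fun x _ => mul_le_mul_of_nonneg_right (hI1pt i x t) (hb x)
          have heq : ∑ x ∈ S', (e * A x t + I1 i x t) * b x
              = e * (∑ x ∈ S', A x t * b x) + ∑ x ∈ S', I1 i x t * b x := by
            rw [Finset.mul_sum, ← Finset.sum_add_distrib]
            exact Finset.sum_congr rfl fun x _ => by ring
          have hXle : ∑ x ∈ S', I1 i x t * b x ≤ X i t := by
            rw [hX_def]
            exact Finset.sum_le_sum_of_subset_of_nonneg (Finset.subset_univ _)
              fun x _ _ => mul_nonneg (hI1nn i x t) (hb x)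
          rw [heq] at hle
          linarith
        exact core_bound hFt hGpos hs0 hsF hs'G hlin hXc hGl he1 hsδ0.le hK2 hkey
      rw [abs_le]
      constructor
      · have := dir S
        linarith
      · have hdirc := dir Sᶜ
        have hcomp1 : ∑ x ∈ Sᶜ, A x t * b x = F t - ∑ x ∈ S, A x t * b x := by
          have h := Finset.sum_add_sum_compl S (fun x => A x t * b x)
          have hFt' : F t = ∑ x : Fin n → D, A x t * b x := by rw [hF_def]
          rw [hFt']
          linarith
        have hcomp2 : ∑ x ∈ Sᶜ, A (Function.update x i d0) t * b x
            = Gm i t - ∑ x ∈ S, A (Function.update x i d0) t * b x := by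
          have h := Finset.sum_add_sum_compl S (fun x => A (Function.update x i d0) t * b x)
          have hGt' : Gm i t = ∑ x : Fin n → D, A (Function.update x i d0) t * b x := by
            rw [hGm_def]
          rw [hGt']
          linarith
        rw [hcomp1, hcomp2] at hdirc
        have e1 : (Gm i t - ∑ x ∈ S, A (Function.update x i d0) t * b x) / Gm i t
            = 1 - (∑ x ∈ S, A (Function.update x i d0) t * b x) / Gm i t := by
          field_simp
        have e2 : (F t - ∑ x ∈ S, A x t * b x) / F t
            = 1 - (∑ x ∈ S, A x t * b x) / F t := by
          field_simp
        rw [e1, e2] at hdirc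
        linarith
end
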